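/- arXiv:1207.6157 — 6 statements merged into one kernel-verified Lean document; each statement's English description precedes it below -/
import Mathlib

section
/- Let Ψ : [0,π] → [0,π] be a measurable function that is monotone, super-additive, and symmetric in π−θ, and suppose that for every continuous convex function F : [0,π] → ℝ one has ∫₀^π F(Ψ(θ))·sin θ dθ ≤ ∫₀^π F(θ)·sin θ dθ. Then Ψ is the identity, i.e. Ψ(θ) = θ for every θ ∈ [0,π]. -/
/-!
Take `F = -sin`, which is convex on `[0, π]`: the hypothesis gives
`∫ sin θ · sin θ ≤ ∫ sin (Ψ θ) · sin θ`. The tangent line inequality of the strictly concave `sin`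
bounds `sin (Ψ θ)` by `sin θ + cos θ (Ψ θ - θ)`, and the cross term `∫ (Ψ θ - θ) cos θ sin θ` is
nonpositive: pairing `θ` with `θ + π/2` reduces it to `Ψ u + π/2 ≤ Ψ (u + π/2)`, which is
super-additivity together with `Ψ (π/2) = π/2` from the symmetry. So the nonnegative tangent gap
integrates to zero, `Ψ θ = θ` almost everywhere, and a monotone self-map of `[0, π]` that fixes
almost every point fixes every point.
-/

open Real MeasureTheory Set

theorem StrictConcaveOn.lt_add_mul_sub_of_hasDerivAt {S : Set ℝ} {f : ℝ → ℝ} {x y f' : ℝ}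
    (hf : StrictConcaveOn ℝ S f) (hx : x ∈ S) (hy : y ∈ S) (hyx : y ≠ x)
    (hf' : HasDerivAt f f' x) : f y < f x + f' * (y - x) := by
  rcases hyx.lt_or_gt with h | h
  · have := hf.lt_slope_of_hasDerivAt hy hx h hf'
    rw [slope_def_field, lt_div_iff₀ (sub_pos.2 h)] at this
    linarith
  · have := hf.slope_lt_of_hasDerivAt hx hy h hf'
    rw [slope_def_field, div_lt_iff₀ (sub_pos.2 h)] at this
    linarith

theorem Real.sin_lt_sin_add_cos_mul_sub {x y : ℝ} (hx : x ∈ Icc 0 π) (hy : y ∈ Icc 0 π)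
    (hyx : y ≠ x) : sin y < sin x + cos x * (y - x) :=
  strictConcaveOn_sin_Icc.lt_add_mul_sub_of_hasDerivAt hx hy hyx (hasDerivAt_sin x)

theorem Real.sin_le_sin_add_cos_mul_sub {x y : ℝ} (hx : x ∈ Icc 0 π) (hy : y ∈ Icc 0 π) :
    sin y ≤ sin x + cos x * (y - x) := by
  rcases eq_or_ne y x with rfl | hyx
  · simp
  · exact (sin_lt_sin_add_cos_mul_sub hx hy hyx).le

theorem Measurable.intervalIntegrable_of_mapsTo {f : ℝ → ℝ} {a b c d : ℝ} (hf : Measurable f)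
    (hab : a ≤ b) (hmaps : MapsTo f (Icc a b) (Icc c d)) : IntervalIntegrable f volume a b := by
  rw [intervalIntegrable_iff_integrableOn_Icc_of_le hab]
  refine Measure.integrableOn_of_bounded (M := |c| ⊔ |d|) (by simp) hf.aestronglyMeasurable ?_
  refine (ae_restrict_iff' measurableSet_Icc).2 (ae_of_all _ fun x hx => ?_)
  exact abs_le_max_abs_abs (hmaps hx).1 (hmaps hx).2

theorem MonotoneOn.eq_self_of_ae_eq_self {f : ℝ → ℝ} {a b : ℝ} (hmono : MonotoneOn f (Icc a b))
    (hmaps : MapsTo f (Icc a b) (Icc a b)) (hae : ∀ᵐ y ∂volume.restrict (Ioo a b), f y = y) :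
    ∀ x ∈ Icc a b, f x = x := by
  intro x hx
  have exists_fixed {c d : ℝ} (hcd : c < d) (hsub : Ioo c d ⊆ Ioo a b) :
      ∃ y ∈ Ioo c d, f y = y :=
    Measure.exists_mem_of_measure_ne_zero_of_ae (by simpa using hcd)
      (ae_restrict_of_ae_restrict_of_subset hsub hae)
  have hy_mem {y : ℝ} (hy : y ∈ Ioo a b) : y ∈ Icc a b := Ioo_subset_Icc_self hy
  rcases lt_trichotomy (f x) x with hlt | heq | hgt
  · obtain ⟨y, hy, hfy⟩ := exists_fixed hlt (Ioo_subset_Ioo (hmaps hx).1 hx.2)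
    have := hmono (hy_mem ⟨(hmaps hx).1.trans_lt hy.1, hy.2.trans_le hx.2⟩) hx hy.2.le
    linarith [hy.1]
  · exact heq
  · obtain ⟨y, hy, hfy⟩ := exists_fixed hgt (Ioo_subset_Ioo hx.1 (hmaps hx).2)
    have := hmono hx (hy_mem ⟨hx.1.trans_lt hy.1, hy.2.trans_le (hmaps hx).2⟩) hy.1.le
    linarith [hy.2]

theorem integral_mul_cos_mul_sin_nonpos {g : ℝ → ℝ} (hg : IntervalIntegrable g volume 0 π)
    (hshift : ∀ u ∈ Icc 0 (π / 2), g u ≤ g (u + π / 2)) :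
    ∫ θ in (0)..π, g θ * (cos θ * sin θ) ≤ 0 := by
  set h : ℝ → ℝ := fun θ => g θ * (cos θ * sin θ)
  have hh : IntervalIntegrable h volume 0 π := hg.mul_continuousOn (by fun_prop)
  have hπ2 : π / 2 ∈ uIcc 0 π := by
    rw [uIcc_of_le pi_pos.le]
    exact ⟨by positivity, by linarith [pi_pos]⟩
  have hh₁ : IntervalIntegrable h volume 0 (π / 2) := hh.mono_set (uIcc_subset_uIcc_left hπ2)
  have hh₂ : IntervalIntegrable h volume (π / 2) π := hh.mono_set (uIcc_subset_uIcc_right hπ2)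
  have hh₂' : IntervalIntegrable (fun u => h (u + π / 2)) volume 0 (π / 2) := by
    simpa [show π - π / 2 = π / 2 by ring] using hh₂.comp_add_right (π / 2)
  have hpair (u : ℝ) : h u + h (u + π / 2) = -((g (u + π / 2) - g u) * (cos u * sin u)) := by
    simp only [h, sin_add_pi_div_two, cos_add_pi_div_two]
    ring
  calc ∫ θ in (0)..π, h θ
      = (∫ u in (0)..(π / 2), h u) + ∫ u in (0)..(π / 2), h (u + π / 2) := by
        rw [← intervalIntegral.integral_add_adjacent_intervals hh₁ hh₂,
          intervalIntegral.integral_comp_add_right]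
        norm_num
    _ = -∫ u in (0)..(π / 2), (g (u + π / 2) - g u) * (cos u * sin u) := by
        rw [← intervalIntegral.integral_add hh₁ hh₂', ← intervalIntegral.integral_neg]
        exact intervalIntegral.integral_congr fun u _ => hpair u
    _ ≤ 0 := by
        refine neg_nonpos.2 (intervalIntegral.integral_nonneg (by positivity) fun u hu => ?_)
        have hcos : 0 ≤ cos u := cos_nonneg_of_mem_Icc ⟨by linarith [hu.1, pi_pos], hu.2⟩
        have hsin : 0 ≤ sin u := sin_nonneg_of_nonneg_of_le_pi hu.1 (by linarith [hu.2, pi_pos])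
        exact mul_nonneg (sub_nonneg.2 (hshift u hu)) (mul_nonneg hcos hsin)

theorem ae_eq_self_of_integral_sin_tangent_le {Ψ : ℝ → ℝ} (hmeas : Measurable Ψ)
    (hmaps : MapsTo Ψ (Icc 0 π) (Icc 0 π))
    (hle : (∫ θ in (0)..π, sin θ * sin θ) + ∫ θ in (0)..π, (Ψ θ - θ) * (cos θ * sin θ)
      ≤ ∫ θ in (0)..π, sin (Ψ θ) * sin θ) :
    ∀ᵐ θ ∂volume.restrict (Ioo 0 π), Ψ θ = θ := by
  set G : ℝ → ℝ := fun θ => (sin θ + cos θ * (Ψ θ - θ) - sin (Ψ θ)) * sin θ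
  have hG_nonneg : ∀ θ ∈ Icc 0 π, 0 ≤ G θ := fun θ hθ =>
    mul_nonneg (sub_nonneg.2 (sin_le_sin_add_cos_mul_sub hθ (hmaps hθ)))
      (sin_nonneg_of_nonneg_of_le_pi hθ.1 hθ.2)
  have hsq : IntervalIntegrable (fun θ => sin θ * sin θ) volume 0 π :=
    (continuous_sin.mul continuous_sin).intervalIntegrable 0 π
  have hcross : IntervalIntegrable (fun θ => (Ψ θ - θ) * (cos θ * sin θ)) volume 0 π :=
    ((hmeas.intervalIntegrable_of_mapsTo pi_pos.le hmaps).sub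
      intervalIntegral.intervalIntegrable_id).mul_continuousOn (by fun_prop)
  have hsinΨ : IntervalIntegrable (fun θ => sin (Ψ θ) * sin θ) volume 0 π :=
    ((measurable_sin.comp hmeas).intervalIntegrable_of_mapsTo (c := -1) (d := 1) pi_pos.le
      fun θ _ => ⟨neg_one_le_sin _, sin_le_one _⟩).mul_continuousOn (by fun_prop)
  have hG_split :
      G = fun θ => (sin θ * sin θ + (Ψ θ - θ) * (cos θ * sin θ)) - sin (Ψ θ) * sin θ := by
    funext θ
    ring
  have hGi : IntervalIntegrable G volume 0 π := hG_split ▸ (hsq.add hcross).sub hsinΨ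
  have hG_zero : ∫ θ in (0)..π, G θ = 0 := by
    refine le_antisymm ?_ (intervalIntegral.integral_nonneg pi_pos.le hG_nonneg)
    rw [hG_split, intervalIntegral.integral_sub (hsq.add hcross) hsinΨ,
      intervalIntegral.integral_add hsq hcross]
    linarith
  have hG_ae : G =ᵐ[volume.restrict (Ioc 0 π)] 0 :=
    (intervalIntegral.integral_eq_zero_iff_of_le_of_nonneg_ae pi_pos.le
      ((ae_restrict_iff' measurableSet_Ioc).2 (ae_of_all _ fun θ hθ =>
        hG_nonneg θ (Ioc_subset_Icc_self hθ))) hGi).1 hG_zero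
  filter_upwards [ae_restrict_of_ae_restrict_of_subset Ioo_subset_Ioc_self hG_ae,
    ae_restrict_mem measurableSet_Ioo] with θ hGθ hθ
  by_contra hne
  have hθ' : θ ∈ Icc 0 π := Ioo_subset_Icc_self hθ
  have hgap := sin_lt_sin_add_cos_mul_sub hθ' (hmaps hθ') hne
  have hpos : 0 < G θ := mul_pos (by linarith) (sin_pos_of_pos_of_lt_pi hθ.1 hθ.2)
  exact hpos.ne' hGθ

/-- Measurable extension of Otal's lemma: a measurable, monotone, super-additive
function `Ψ : [0,π] → [0,π]` which is symmetric in `π - θ` and satisfies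
`∫₀^π F(Ψ θ) sin θ dθ ≤ ∫₀^π F(θ) sin θ dθ` for every continuous convex `F`
must be the identity. -/
theorem otal_lemma_measurable (Ψ : ℝ → ℝ)
    (hmeas : Measurable Ψ)
    (hmaps : ∀ θ ∈ Icc (0:ℝ) π, Ψ θ ∈ Icc (0:ℝ) π)
    (hmono : ∀ θ₁ ∈ Icc (0:ℝ) π, ∀ θ₂ ∈ Icc (0:ℝ) π, θ₁ ≤ θ₂ → Ψ θ₁ ≤ Ψ θ₂)
    (hsuper : ∀ θ₁ ∈ Icc (0:ℝ) π, ∀ θ₂ ∈ Icc (0:ℝ) π, θ₁ + θ₂ ≤ π →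
      Ψ θ₁ + Ψ θ₂ ≤ Ψ (θ₁ + θ₂))
    (hsym : ∀ θ ∈ Icc (0:ℝ) π, Ψ (π - θ) = π - Ψ θ)
    (hint : ∀ F : ℝ → ℝ, ContinuousOn F (Icc (0:ℝ) π) → ConvexOn ℝ (Icc (0:ℝ) π) F →
      ∫ θ in (0:ℝ)..π, F (Ψ θ) * Real.sin θ ≤ ∫ θ in (0:ℝ)..π, F θ * Real.sin θ) :
    ∀ θ ∈ Icc (0:ℝ) π, Ψ θ = θ := by
  have hhalf_mem : π / 2 ∈ Icc 0 π := ⟨by positivity, by linarith [pi_pos]⟩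
  have hhalf : Ψ (π / 2) = π / 2 := by
    have := hsym (π / 2) hhalf_mem
    rw [sub_half] at this
    linarith
  have hcross : ∫ θ in (0)..π, (Ψ θ - θ) * (cos θ * sin θ) ≤ 0 := by
    refine integral_mul_cos_mul_sin_nonpos ((hmeas.intervalIntegrable_of_mapsTo pi_pos.le
      hmaps).sub intervalIntegral.intervalIntegrable_id) fun u hu => ?_
    have hu' : u ∈ Icc 0 π := ⟨hu.1, hu.2.trans (by linarith [pi_pos])⟩
    linarith [hsuper u hu' (π / 2) hhalf_mem (by linarith [hu.2])]
  have hsin := hint (fun x => -sin x) continuous_sin.neg.continuousOn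
    strictConcaveOn_sin_Icc.neg.convexOn
  simp only [neg_mul, intervalIntegral.integral_neg, neg_le_neg_iff] at hsin
  exact MonotoneOn.eq_self_of_ae_eq_self (fun _ h₁ _ h₂ h => hmono _ h₁ _ h₂ h) hmaps
    (ae_eq_self_of_integral_sin_tangent_le hmeas hmaps (by linarith))
end

section
/- Let Ψ : [0,π] → [0,π] be a measurable function such that for every continuous convex function F : [0,π] → ℝ one has ∫₀^π F(Ψ(θ))·sin θ dθ ≤ ∫₀^π F(θ)·sin θ dθ. Then for every a ∈ (0,π] there exists x ∈ (0,a) with Ψ(x) ≥ x; equivalently, there exists a sequence of points x_i > 0 tending to 0 with Ψ(x_i) ≥ x_i for all i. -/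
open Real MeasureTheory Set

/-!
Suppose `Ψ x < x` on all of `(0, a)`. The hinge function `F_a θ = max (a - θ) 0` is continuous,
convex and antitone, so `F_a (Ψ θ) ≥ F_a θ` for every `θ ∈ (0, π]`, strictly on `(0, a)`, where
`sin` is positive. Hence `∫ F_a(Ψ θ) sin θ dθ > ∫ F_a(θ) sin θ dθ`, against the hypothesis.
-/

def hinge (a θ : ℝ) : ℝ := max (a - θ) 0

lemma continuous_hinge (a : ℝ) : Continuous (hinge a) :=
  (continuous_const.sub continuous_id).max continuous_const

lemma convexOn_hinge (a : ℝ) {s : Set ℝ} (hs : Convex ℝ s) : ConvexOn ℝ s (hinge a) :=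
  ((convexOn_const a hs).sub (concaveOn_id hs)).sup (convexOn_const 0 hs)

lemma hinge_nonneg (a θ : ℝ) : 0 ≤ hinge a θ := le_max_right _ _

lemma antitone_hinge (a : ℝ) : Antitone (hinge a) := fun _ _ hxy =>
  max_le_max (sub_le_sub_left hxy a) le_rfl

lemma hinge_lt_hinge {a x y : ℝ} (hxy : x < y) (hya : y < a) : hinge a y < hinge a x := by
  rw [hinge, hinge, max_eq_left (by linarith)]
  exact lt_max_of_lt_left (by linarith)

lemma hinge_le_hinge_comp {a θ : ℝ} {Ψ : ℝ → ℝ} (hΨ : θ < a → Ψ θ < θ) :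
    hinge a θ ≤ hinge a (Ψ θ) := by
  rcases lt_or_ge θ a with hθa | haθ
  · exact antitone_hinge a (hΨ hθa).le
  · rw [hinge, max_eq_right (by linarith)]
    exact hinge_nonneg a _

lemma intervalIntegrable_comp_mul_of_mapsTo {F Ψ w : ℝ → ℝ} {a b : ℝ} {K : Set ℝ}
    (hF : Continuous F) (hK : IsCompact K) (hΨ : Measurable Ψ) (hmaps : MapsTo Ψ (uIcc a b) K)
    (hw : ContinuousOn w (uIcc a b)) :
    IntervalIntegrable (fun θ => F (Ψ θ) * w θ) volume a b := by
  obtain ⟨C, hC⟩ := hK.exists_bound_of_continuousOn hF.continuousOn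
  have hFΨ : IntervalIntegrable (F ∘ Ψ) volume a b := by
    rw [intervalIntegrable_iff]
    refine Measure.integrableOn_of_bounded measure_Ioc_lt_top.ne ?_ (M := C) ?_
    · exact (hF.measurable.comp hΨ).aestronglyMeasurable
    · filter_upwards [ae_restrict_mem measurableSet_uIoc] with θ hθ
      exact hC _ (hmaps (uIoc_subset_uIcc hθ))
  exact hFΨ.mul_continuousOn hw

lemma integral_hinge_mul_sin_lt {Ψ : ℝ → ℝ} {a : ℝ} (hmeas : Measurable Ψ)
    (hmaps : MapsTo Ψ (Icc 0 π) (Icc 0 π)) (ha : a ∈ Ioc 0 π) (hlt : ∀ x ∈ Ioo 0 a, Ψ x < x) :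
    ∫ θ in (0:ℝ)..π, hinge a θ * sin θ < ∫ θ in (0:ℝ)..π, hinge a (Ψ θ) * sin θ := by
  have hsin : ContinuousOn sin (uIcc 0 π) := continuous_sin.continuousOn
  have hle : ∀ θ ∈ Ioc 0 π, hinge a θ * sin θ ≤ hinge a (Ψ θ) * sin θ := fun θ ⟨hθ0, hθπ⟩ =>
    mul_le_mul_of_nonneg_right (hinge_le_hinge_comp fun hθa => hlt θ ⟨hθ0, hθa⟩)
      (sin_nonneg_of_nonneg_of_le_pi hθ0.le hθπ)
  have hstrict : Ioo 0 a ⊆ {θ | hinge a θ * sin θ < hinge a (Ψ θ) * sin θ} ∩ Ioc 0 π :=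
    fun θ hθ => ⟨mul_lt_mul_of_pos_right (hinge_lt_hinge (hlt θ hθ) hθ.2)
      (sin_pos_of_pos_of_lt_pi hθ.1 (hθ.2.trans_le ha.2)), hθ.1, hθ.2.le.trans ha.2⟩
  refine intervalIntegral.integral_lt_integral_of_ae_le_of_measure_setOfPred_lt_ne_zero
    pi_pos.le (((continuous_hinge a).intervalIntegrable 0 π).mul_continuousOn hsin)
    (intervalIntegrable_comp_mul_of_mapsTo (continuous_hinge a) isCompact_Icc hmeas
      (by rwa [uIcc_of_le pi_pos.le]) hsin)
    ((ae_restrict_iff' measurableSet_Ioc).mpr (.of_forall hle)) ?_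
  rw [Measure.restrict_apply' measurableSet_Ioc]
  exact ((Measure.measure_Ioo_pos _).mpr ha.1).trans_le (measure_mono hstrict) |>.ne'

/-- If a measurable `Ψ : [0,π] → [0,π]` satisfies
`∫₀^π F(Ψ θ) sin θ dθ ≤ ∫₀^π F(θ) sin θ dθ` for every continuous convex `F`, then
there are points arbitrarily close to `0` at which `Ψ` lies at or above the identity. -/
theorem points_above_identity_near_zero (Ψ : ℝ → ℝ)
    (hmeas : Measurable Ψ)
    (hmaps : ∀ θ ∈ Icc (0:ℝ) π, Ψ θ ∈ Icc (0:ℝ) π)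
    (hint : ∀ F : ℝ → ℝ, ContinuousOn F (Icc (0:ℝ) π) → ConvexOn ℝ (Icc (0:ℝ) π) F →
      ∫ θ in (0:ℝ)..π, F (Ψ θ) * Real.sin θ ≤ ∫ θ in (0:ℝ)..π, F θ * Real.sin θ) :
    ∀ a ∈ Ioc (0:ℝ) π, ∃ x ∈ Ioo (0:ℝ) a, x ≤ Ψ x := by
  intro a ha
  by_contra! hlt
  exact (integral_hinge_mul_sin_lt hmeas hmaps ha hlt).not_ge
    (hint (hinge a) (continuous_hinge a).continuousOn (convexOn_hinge a (convex_Icc 0 π)))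
end

section
/- Let Ψ : [0,π] → [0,π] be monotone, super-additive, and symmetric in π−θ, and suppose that for every a ∈ (0,π] there exists x ∈ (0,a) with Ψ(x) ≥ x (i.e. there are points arbitrarily close to 0 at which Ψ lies at or above the identity). Then Ψ(θ) = θ for every θ ∈ [0,π]. -/
open Real Set

/-- Order-theoretic half of the measurable extension of Otal's lemma: a monotone,
super-additive function `Ψ : [0,π] → [0,π]` symmetric in `π - θ` which lies at or
above the identity at points arbitrarily close to `0` is the identity. -/
theorem identity_from_points_above (Ψ : ℝ → ℝ)
    (hmaps : ∀ θ ∈ Icc (0:ℝ) π, Ψ θ ∈ Icc (0:ℝ) π)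
    (hmono : ∀ θ₁ ∈ Icc (0:ℝ) π, ∀ θ₂ ∈ Icc (0:ℝ) π, θ₁ ≤ θ₂ → Ψ θ₁ ≤ Ψ θ₂)
    (hsuper : ∀ θ₁ ∈ Icc (0:ℝ) π, ∀ θ₂ ∈ Icc (0:ℝ) π, θ₁ + θ₂ ≤ π →
      Ψ θ₁ + Ψ θ₂ ≤ Ψ (θ₁ + θ₂))
    (hsym : ∀ θ ∈ Icc (0:ℝ) π, Ψ (π - θ) = π - Ψ θ)
    (habove : ∀ a ∈ Ioc (0:ℝ) π, ∃ x ∈ Ioo (0:ℝ) a, x ≤ Ψ x) :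
    ∀ θ ∈ Icc (0:ℝ) π, Ψ θ = θ := by
  have hpi := Real.pi_pos
  have h0mem : (0:ℝ) ∈ Icc (0:ℝ) π := ⟨le_refl _, hpi.le⟩
  have hΨ0 : Ψ 0 = 0 := by
    have h1 := hsuper 0 h0mem 0 h0mem (by simpa using hpi.le)
    have h2 := (hmaps 0 h0mem).1
    simp only [add_zero] at h1
    linarith
  have hge : ∀ θ ∈ Icc (0:ℝ) π, θ ≤ Ψ θ := by
    intro θ hθ
    rcases eq_or_lt_of_le hθ.1 with h | hθpos
    · rw [← h, hΨ0]
    · by_contra hlt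
      push_neg at hlt
      obtain ⟨x, hx, hxΨ⟩ := habove (min θ (θ - Ψ θ))
        ⟨lt_min hθpos (by linarith), le_trans (min_le_left _ _) hθ.2⟩
      have hx0 : 0 < x := hx.1
      have hxθ : x < θ := lt_of_lt_of_le hx.2 (min_le_left _ _)
      have hxε : x < θ - Ψ θ := lt_of_lt_of_le hx.2 (min_le_right _ _)
      have hxmem : x ∈ Icc (0:ℝ) π := ⟨hx0.le, by linarith [hθ.2]⟩
      have key : ∀ n : ℕ, (n : ℝ) * x ≤ π → (n : ℝ) * x ≤ Ψ ((n : ℝ) * x) := by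
        intro n
        induction n with
        | zero => intro _; simp [hΨ0]
        | succ n ih =>
          intro hle
          have hnx : (n : ℝ) * x ≤ ((n : ℝ) + 1) * x := by nlinarith
          push_cast at hle ⊢
          have hle' : (n : ℝ) * x ≤ π := le_trans (by push_cast at hnx; linarith) hle
          have hIH := ih hle'
          have hnmem : (n : ℝ) * x ∈ Icc (0:ℝ) π :=
            ⟨by positivity, hle'⟩
          have hs := hsuper ((n : ℝ) * x) hnmem x hxmem (by linarith [hle])
          have : ((n : ℝ) + 1) * x = (n : ℝ) * x + x := by ring
          rw [this]
          linarith
      set n : ℕ := ⌊θ / x⌋₊ with hn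
      have hfl : (n : ℝ) ≤ θ / x := Nat.floor_le (by positivity)
      have hfu : θ / x < (n : ℝ) + 1 := Nat.lt_floor_add_one _
      have hnxθ : (n : ℝ) * x ≤ θ := (le_div_iff₀ hx0).mp hfl
      have hθnx : θ < ((n : ℝ) + 1) * x := by
        have := (div_lt_iff₀ hx0).mp hfu
        linarith
      have hnmem : (n : ℝ) * x ∈ Icc (0:ℝ) π := ⟨by positivity, le_trans hnxθ hθ.2⟩
      have h1 := key n (le_trans hnxθ hθ.2)
      have h2 := hmono ((n : ℝ) * x) hnmem θ hθ hnxθ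
      nlinarith
  intro θ hθ
  have h1 := hge θ hθ
  have hπθ : π - θ ∈ Icc (0:ℝ) π := ⟨by linarith [hθ.2], by linarith [hθ.1]⟩
  have h2 := hge (π - θ) hπθ
  rw [hsym θ hθ] at h2
  linarith
end

section
/- Let Ψ : [0,π] → [0,π] be monotone, let b ∈ (0,π] satisfy Ψ(b) < b, and suppose that for every c ∈ (0,b] there exists x ∈ (0,c) with Ψ(x) ≥ x. Let a = sup { x ∈ [0,b) : Ψ(x) ≥ x }. Then a ≤ Ψ(b) < b and Ψ(a) = a. -/
open Real Set

/-- Key intermediate claim: if `Ψ : [0,π] → [0,π]` is monotone, `Ψ b < b`, and below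
every `c ∈ (0,b]` there is a point `x ∈ (0,c)` with `Ψ x ≥ x`, then the supremum `a`
of the set `{x ∈ [0,b) : Ψ x ≥ x}` satisfies `a ≤ Ψ b < b` and is a fixed point of `Ψ`. -/
theorem sup_is_fixed_point (Ψ : ℝ → ℝ)
    (hmaps : ∀ θ ∈ Icc (0:ℝ) π, Ψ θ ∈ Icc (0:ℝ) π)
    (hmono : ∀ θ₁ ∈ Icc (0:ℝ) π, ∀ θ₂ ∈ Icc (0:ℝ) π, θ₁ ≤ θ₂ → Ψ θ₁ ≤ Ψ θ₂)
    (b : ℝ) (hb : b ∈ Ioc (0:ℝ) π) (hΨb : Ψ b < b)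
    (habove : ∀ c ∈ Ioc (0:ℝ) b, ∃ x ∈ Ioo (0:ℝ) c, x ≤ Ψ x)
    (a : ℝ) (ha : a = sSup {x | x ∈ Ico (0:ℝ) b ∧ x ≤ Ψ x}) :
    a ≤ Ψ b ∧ Ψ b < b ∧ Ψ a = a := by
  set S : Set ℝ := {x | x ∈ Ico (0:ℝ) b ∧ x ≤ Ψ x} with hS
  have hbI : b ∈ Icc (0:ℝ) π := ⟨hb.1.le, hb.2⟩
  obtain ⟨x₀, hx₀, hx₀Ψ⟩ := habove b ⟨hb.1, le_refl b⟩
  have hx₀S : x₀ ∈ S := ⟨⟨hx₀.1.le, hx₀.2⟩, hx₀Ψ⟩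
  have hne : S.Nonempty := ⟨x₀, hx₀S⟩
  have hmem : ∀ x ∈ S, x ∈ Icc (0:ℝ) π :=
    fun x hx => ⟨hx.1.1, hx.1.2.le.trans hb.2⟩
  have hbdd : BddAbove S := ⟨b, fun x hx => hx.1.2.le⟩
  have hub : ∀ x ∈ S, x ≤ Ψ b := fun x hx =>
    hx.2.trans (hmono x (hmem x hx) b hbI hx.1.2.le)
  have haub : a ≤ Ψ b := ha ▸ csSup_le hne hub
  have ha0 : 0 ≤ a := le_trans hx₀.1.le (ha ▸ le_csSup hbdd hx₀S)
  have haI : a ∈ Icc (0:ℝ) π := ⟨ha0, haub.trans ((hmaps b hbI).2)⟩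
  have hle : a ≤ Ψ a := by
    have key : sSup S ≤ Ψ a := csSup_le hne fun x hx =>
      hx.2.trans (hmono x (hmem x hx) a haI (ha ▸ le_csSup hbdd hx))
    rwa [← ha] at key
  refine ⟨haub, hΨb, le_antisymm ?_ hle⟩
  by_contra h
  push_neg at h
  set y := (a + Ψ a) / 2 with hy
  have hay : a < y := by rw [hy]; linarith
  have hyΨa : y < Ψ a := by rw [hy]; linarith
  have hΨab : Ψ a ≤ Ψ b := hmono a haI b hbI (haub.trans hΨb.le)
  have hyb : y < b := lt_of_lt_of_le hyΨa (hΨab.trans hΨb.le)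
  have hyI : y ∈ Icc (0:ℝ) π := ⟨le_trans ha0 hay.le, hyb.le.trans hb.2⟩
  have hyS : y ∈ S := ⟨⟨le_trans ha0 hay.le, hyb⟩,
    le_trans hyΨa.le (hmono a haI y hyI hay.le)⟩
  exact absurd (ha ▸ le_csSup hbdd hyS) (not_le.mpr hay)
end

section
/- Let m ∈ (0,1] and let ψ : [0,π] → [0,π] be monotone, super-additive, and symmetric in π−θ. Suppose that for every a ∈ (0,π] there exists x ∈ (0,a) with ψ(x) ≥ m·x (i.e. there is no initial interval (0,a) on which ψ(θ) < m·θ everywhere). Then, with ε = π − m·π, one has |ψ(θ) − θ| ≤ ε for every θ ∈ [0,π]. -/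
open Real Set

/-- Quantitative version of Otal's lemma: if `ψ : [0,π] → [0,π]` is monotone,
super-additive and symmetric in `π - θ`, and there is no initial interval `(0,a)` on
which `ψ(θ) < m·θ` everywhere, then `ψ` is within `ε = π - m·π` of the identity. -/
theorem psi_close_to_identity (m : ℝ) (hm : m ∈ Ioc (0:ℝ) 1)
    (ψ : ℝ → ℝ)
    (hmaps : ∀ θ ∈ Icc (0:ℝ) π, ψ θ ∈ Icc (0:ℝ) π)
    (hmono : ∀ θ₁ ∈ Icc (0:ℝ) π, ∀ θ₂ ∈ Icc (0:ℝ) π, θ₁ ≤ θ₂ → ψ θ₁ ≤ ψ θ₂)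
    (hsuper : ∀ θ₁ ∈ Icc (0:ℝ) π, ∀ θ₂ ∈ Icc (0:ℝ) π, θ₁ + θ₂ ≤ π →
      ψ θ₁ + ψ θ₂ ≤ ψ (θ₁ + θ₂))
    (hsym : ∀ θ ∈ Icc (0:ℝ) π, ψ (π - θ) = π - ψ θ)
    (habove : ∀ a ∈ Ioc (0:ℝ) π, ∃ x ∈ Ioo (0:ℝ) a, m * x ≤ ψ x) :
    ∀ θ ∈ Icc (0:ℝ) π, |ψ θ - θ| ≤ π - m * π := by
  have hpi := Real.pi_pos
  have hψ0 : ψ 0 = 0 := by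
    have h1 := hsuper 0 ⟨le_refl 0, hpi.le⟩ 0 ⟨le_refl 0, hpi.le⟩ (by linarith)
    have h2 := (hmaps 0 ⟨le_refl 0, hpi.le⟩).1
    norm_num at h1
    linarith
  -- iterating super-additivity
  have hiter : ∀ (x : ℝ), x ∈ Icc 0 π → ∀ n : ℕ, (n : ℝ) * x ≤ π →
      (n : ℝ) * ψ x ≤ ψ ((n : ℝ) * x) := by
    intro x hx n
    induction n with
    | zero => intro _; simp [hψ0]
    | succ k ih =>
      intro hle
      push_cast at hle ⊢
      have hk0 : (0:ℝ) ≤ (k : ℝ) := Nat.cast_nonneg k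
      have hxn : (k : ℝ) * x ≤ π := by nlinarith [hx.1]
      have hψx := hmaps x hx
      have hkx : (k : ℝ) * x ∈ Icc 0 π := ⟨mul_nonneg hk0 hx.1, hxn⟩
      have hs := hsuper ((k : ℝ) * x) hkx x hx (by linarith)
      have := ih hxn
      have heq : ((k : ℝ) + 1) * x = (k : ℝ) * x + x := by ring
      rw [heq]
      linarith
  -- the key lower bound: ψ θ ≥ m θ
  have hge : ∀ θ ∈ Icc (0:ℝ) π, m * θ ≤ ψ θ := by
    intro θ hθ
    rcases eq_or_lt_of_le hθ.1 with h0 | h0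
    · simp [← h0, hψ0]
    have key : ∀ ε > (0:ℝ), m * θ ≤ ψ θ + ε := by
      intro ε hε
      set δ := min θ (ε / m) with hδdef
      have hδpos : 0 < δ := lt_min h0 (div_pos hε hm.1)
      obtain ⟨x, hx, hψx⟩ := habove δ ⟨hδpos, le_trans (min_le_left _ _) hθ.2⟩
      have hxpos := hx.1
      have hxθ : x < θ := lt_of_lt_of_le hx.2 (min_le_left _ _)
      have hxε : m * x ≤ ε := by
        have hxδ : x ≤ ε / m := le_of_lt (lt_of_lt_of_le hx.2 (min_le_right _ _))
        calc m * x ≤ m * (ε / m) := by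
              exact mul_le_mul_of_nonneg_left hxδ hm.1.le
          _ = ε := by rw [mul_comm, div_mul_cancel₀ _ hm.1.ne']
      set n := ⌊θ / x⌋₊ with hn
      have hnle : (n : ℝ) ≤ θ / x := Nat.floor_le (div_nonneg hθ.1 hxpos.le)
      have hnx_le : (n : ℝ) * x ≤ θ := by
        have := mul_le_mul_of_nonneg_right hnle hxpos.le
        rwa [div_mul_cancel₀ _ hxpos.ne'] at this
      have hlt : θ < ((n : ℝ) + 1) * x := by
        have := Nat.lt_floor_add_one (θ / x)
        have := (div_lt_iff₀ hxpos).mp this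
        linarith
      have hxIcc : x ∈ Icc (0:ℝ) π := ⟨hxpos.le, le_trans hxθ.le hθ.2⟩
      have h1 := hiter x hxIcc n (le_trans hnx_le hθ.2)
      have h2 := hmono ((n : ℝ) * x)
        ⟨mul_nonneg (Nat.cast_nonneg n) hxpos.le, le_trans hnx_le hθ.2⟩ θ hθ hnx_le
      have hnψ : (n : ℝ) * (m * x) ≤ (n : ℝ) * ψ x :=
        mul_le_mul_of_nonneg_left hψx (Nat.cast_nonneg n)
      nlinarith [hm.1]
    linarith [le_of_forall_pos_le_add key]
  -- conclude
  intro θ hθ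
  have hsub : π - θ ∈ Icc (0:ℝ) π := ⟨by linarith [hθ.2], by linarith [hθ.1]⟩
  have hlow := hge θ hθ
  have hup : ψ θ ≤ π - m * (π - θ) := by
    have h1 := hge (π - θ) hsub
    have h2 := hsym θ hθ
    linarith
  rw [abs_le]
  constructor
  · nlinarith [hm.2, hθ.2, hm.1]
  · nlinarith [hm.2, hθ.1, hm.1]
end

section
/- Let 0 < x ≤ π and a > 0, and let ψ : [0,π] → ℝ be a measurable nonnegative function satisfying ψ(θ) ≤ (a/x)·θ for all θ ∈ [0,x]. Then ∫₀^π max(a − ψ(θ), 0)·sin θ dθ ≥ a·(1 − (sin x)/x). -/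
open Real MeasureTheory Set

/-!
Since `sin ≥ 0` on `[0, π]`, dropping `[x, π]` only decreases the integral, and on `[0, x]` the
integrand dominates `(a - (a / x) θ) sin θ`, whose integral is elementary.
-/

theorem integral_sub_mul_mul_sin (c d b : ℝ) :
    ∫ θ in (0 : ℝ)..b, (c - d * θ) * sin θ = c * (1 - cos b) - d * (sin b - b * cos b) := by
  have hderiv : ∀ θ ∈ uIcc (0 : ℝ) b,
      HasDerivAt (fun t => -c * cos t - d * (sin t - t * cos t)) ((c - d * θ) * sin θ) θ := by
    intro θ _
    refine (((hasDerivAt_cos θ).const_mul (-c)).sub (((hasDerivAt_sin θ).sub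
      ((hasDerivAt_id θ).mul (hasDerivAt_cos θ))).const_mul d)).congr_deriv ?_
    simp only [id]
    ring
  rw [intervalIntegral.integral_eq_sub_of_hasDerivAt hderiv
    (Continuous.intervalIntegrable (by fun_prop) _ _)]
  simp only [cos_zero, sin_zero]
  ring

theorem integral_chord_mul_sin {x : ℝ} (hx : x ≠ 0) (a : ℝ) :
    ∫ θ in (0 : ℝ)..x, (a - a / x * θ) * sin θ = a * (1 - sin x / x) := by
  rw [integral_sub_mul_mul_sin]
  field_simp
  ring

theorem intervalIntegrable_max_sub_mul_sin {ψ : ℝ → ℝ} {u v : ℝ} (hψ : Measurable ψ)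
    (hnonneg : ∀ θ ∈ uIcc u v, 0 ≤ ψ θ) (a : ℝ) :
    IntervalIntegrable (fun θ => max (a - ψ θ) 0 * sin θ) volume u v := by
  refine (intervalIntegrable_const (c := max a 0)).mono_fun
    (((measurable_const.sub hψ).max measurable_const).mul measurable_sin).aestronglyMeasurable
    (ae_restrict_of_forall_mem measurableSet_uIoc fun θ hθ => ?_)
  have hψθ := hnonneg θ (uIoc_subset_uIcc hθ)
  dsimp only
  rw [norm_mul, norm_of_nonneg (le_max_right _ _), norm_of_nonneg (le_max_right a 0)]
  exact (mul_le_of_le_one_right (le_max_right _ _) (abs_sin_le_one θ)).trans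
    (max_le_max_right 0 (by linarith))

theorem lower_bound_integral_general (x a : ℝ) (hx : 0 < x) (hxπ : x ≤ π)
    (ψ : ℝ → ℝ)
    (hmeas : Measurable ψ)
    (hnonneg : ∀ θ ∈ Icc (0:ℝ) π, 0 ≤ ψ θ)
    (hle : ∀ θ ∈ Icc (0:ℝ) x, ψ θ ≤ (a / x) * θ) :
    a * (1 - Real.sin x / x) ≤ ∫ θ in (0:ℝ)..π, max (a - ψ θ) 0 * Real.sin θ := by
  have hint : IntervalIntegrable (fun θ => max (a - ψ θ) 0 * sin θ) volume 0 π :=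
    intervalIntegrable_max_sub_mul_sin hmeas (by rwa [uIcc_of_le pi_pos.le]) a
  calc a * (1 - sin x / x) = ∫ θ in (0 : ℝ)..x, (a - a / x * θ) * sin θ :=
        (integral_chord_mul_sin hx.ne' a).symm
    _ ≤ ∫ θ in (0 : ℝ)..x, max (a - ψ θ) 0 * sin θ := by
        refine intervalIntegral.integral_mono_on hx.le
          (Continuous.intervalIntegrable (by fun_prop) _ _)
          (hint.mono_set (uIcc_subset_uIcc_left (mem_uIcc_of_le hx.le hxπ))) fun θ hθ => ?_
        exact mul_le_mul_of_nonneg_right (le_max_of_le_left (by linarith [hle θ hθ]))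
          (sin_nonneg_of_nonneg_of_le_pi hθ.1 (hθ.2.trans hxπ))
    _ ≤ ∫ θ in (0 : ℝ)..π, max (a - ψ θ) 0 * sin θ :=
        intervalIntegral.integral_mono_interval le_rfl hx.le hxπ
          (ae_restrict_of_forall_mem measurableSet_Ioc fun θ hθ =>
            mul_nonneg (le_max_right _ _) (sin_nonneg_of_nonneg_of_le_pi hθ.1.le hθ.2))
          hint

/-- Lower bound: if a measurable nonnegative `ψ` on `[0,π]` satisfies
`ψ θ ≤ (a/x)·θ` on `[0,x]`, then `∫₀^π max(a - ψ θ, 0) sin θ dθ ≥ a (1 - sin x / x)`. -/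
theorem lower_bound_integral (x a : ℝ) (hx : 0 < x) (hxπ : x ≤ π) (ha : 0 < a)
    (ψ : ℝ → ℝ)
    (hmeas : Measurable ψ)
    (hnonneg : ∀ θ ∈ Icc (0:ℝ) π, 0 ≤ ψ θ)
    (hle : ∀ θ ∈ Icc (0:ℝ) x, ψ θ ≤ (a / x) * θ) :
    a * (1 - Real.sin x / x) ≤ ∫ θ in (0:ℝ)..π, max (a - ψ θ) 0 * Real.sin θ :=
  lower_bound_integral_general x a hx hxπ ψ hmeas hnonneg hle
end
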